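/- Let N ≥ m ≥ 1 be integers and let S be the resampling matrix on ℝ^{Π(m)}. Then for every integer k ≥ 0 and all vectors v, f ∈ ℝ^{Π(m)}: | vᵀ (Id − S)^{k+1} f | ≤ ‖v‖_∞ · ( 2·(1 − N^{(m)}/N^m) )^{k+1} · ‖f‖₁. (This bounds the bias of the k-times iterated bootstrap applied to the moment polynomial with coefficient vector f and moment-product vector v.) -/

import Mathlib

open Finset
open scoped Classical

/-!
Sort the functions `g : Fin m → Fin N` that are constant on the parts of `σ` by their kernel
partition `π ≥ σ`: there are `N ^ #σ` of them, and exactly `N^{(#π)}` have kernel `π` (they are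
the injective colourings of the parts of `π`). So every column of `S` sums to at most `1`, and
the column `σ` of `1 - S` has ℓ¹-norm at most `2 (1 - S σ σ)`. Since `k ↦ N^{(k)} / N^k` is
antitone and `#σ ≤ m`, this is at most `2 (1 - N^{(m)} / N^m)`; hence `1 - S` contracts the
ℓ¹-norm by that factor, and pairing with `v` costs `‖v‖_∞`.
-/

/-- The resampling matrix `S ∈ ℝ^{Π(m)×Π(m)}`:
`S_{π,σ} = N^{(#π)} / N^{#σ}` if `σ ≤ π`, and `0` otherwise. -/
noncomputable def resampS (N m : ℕ) :
    Matrix (Finpartition (Finset.univ : Finset (Fin m)))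
      (Finpartition (Finset.univ : Finset (Fin m))) ℝ :=
  fun π σ =>
    if σ ≤ π then (N.descFactorial π.parts.card : ℝ) / (N : ℝ) ^ σ.parts.card else 0

namespace Finpartition

variable {α β : Type*} [Fintype α] [DecidableEq α]

theorem le_iff_part_eq_imp {P Q : Finpartition (univ : Finset α)} :
    P ≤ Q ↔ ∀ x y, P.part x = P.part y → Q.part x = Q.part y := by
  refine ⟨fun hPQ x y hxy => ?_, fun h t ht => ?_⟩
  · obtain ⟨c, hc, hxc⟩ := hPQ (P.part_mem.2 (mem_univ x))
    have hy : y ∈ c := hxc (hxy ▸ P.mem_part_self.2 (mem_univ y))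
    rw [Q.part_eq_of_mem hc (hxc (P.mem_part_self.2 (mem_univ x))), Q.part_eq_of_mem hc hy]
  · obtain ⟨x, hx⟩ := P.nonempty_of_mem_parts ht
    refine ⟨Q.part x, Q.part_mem.2 (mem_univ x), fun y hy => ?_⟩
    rw [h x y (by rw [P.part_eq_of_mem ht hx, P.part_eq_of_mem ht hy])]
    exact Q.mem_part_self.2 (mem_univ y)

theorem eq_iff_part_eq_iff {P Q : Finpartition (univ : Finset α)} :
    P = Q ↔ ∀ x y, P.part x = P.part y ↔ Q.part x = Q.part y := by
  refine ⟨fun h _ _ => h ▸ Iff.rfl, fun h => le_antisymm ?_ ?_⟩ <;>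
    rw [le_iff_part_eq_imp] <;> intro x y <;> simp [h x y]

noncomputable def ker (g : α → β) : Finpartition (univ : Finset α) :=
  ofSetoid (Setoid.ker g)

theorem part_ker_eq_iff {g : α → β} {x y : α} :
    (ker g).part x = (ker g).part y ↔ g x = g y := by
  rw [eq_comm, ← (ker g).mem_part_iff_part_eq_part (mem_univ y) (mem_univ x), ker,
    mem_part_ofSetoid_iff_rel, Setoid.ker_def]

def toPart (P : Finpartition (univ : Finset α)) (x : α) : P.parts :=
  ⟨P.part x, P.part_mem.2 (mem_univ x)⟩

noncomputable def rep (P : Finpartition (univ : Finset α)) (t : P.parts) : α :=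
  (P.nonempty_of_mem_parts t.2).choose

theorem toPart_eq_iff {P : Finpartition (univ : Finset α)} {x y : α} :
    P.toPart x = P.toPart y ↔ P.part x = P.part y :=
  Subtype.ext_iff

theorem toPart_rep (P : Finpartition (univ : Finset α)) (t : P.parts) : P.toPart (P.rep t) = t :=
  Subtype.ext (P.part_eq_of_mem t.2 (P.nonempty_of_mem_parts t.2).choose_spec)

theorem le_ker_iff {P : Finpartition (univ : Finset α)} {g : α → β} :
    P ≤ ker g ↔ ∀ x y, P.toPart x = P.toPart y → g x = g y := by
  simp only [le_iff_part_eq_imp, part_ker_eq_iff, toPart_eq_iff]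

theorem ker_eq_iff {P : Finpartition (univ : Finset α)} {g : α → β} :
    ker g = P ↔ ∀ x y, g x = g y ↔ P.toPart x = P.toPart y := by
  simp only [eq_iff_part_eq_iff, part_ker_eq_iff, toPart_eq_iff]

noncomputable def leKerEquiv (P : Finpartition (univ : Finset α)) :
    {g : α → β // P ≤ ker g} ≃ (P.parts → β) where
  toFun g := g.1 ∘ P.rep
  invFun u := ⟨u ∘ P.toPart, le_ker_iff.2 fun x y h => by simp [h]⟩
  left_inv g := Subtype.ext <| funext fun x => le_ker_iff.1 g.2 _ _ (P.toPart_rep _)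
  right_inv u := funext fun t => congrArg u (P.toPart_rep t)

noncomputable def kerEqEquiv (P : Finpartition (univ : Finset α)) :
    {g : α → β // ker g = P} ≃ (P.parts ↪ β) where
  toFun g := ⟨g.1 ∘ P.rep, fun s t h => by
    simpa [toPart_rep] using (ker_eq_iff.1 g.2 (P.rep s) (P.rep t)).1 h⟩
  invFun e := ⟨e ∘ P.toPart, ker_eq_iff.2 fun x y => by simp⟩
  left_inv g := Subtype.ext <| funext fun x =>
    (ker_eq_iff.1 g.2 _ _).2 (P.toPart_rep _)
  right_inv e := Function.Embedding.ext fun t => congrArg e (P.toPart_rep t)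

theorem sum_descFactorial_card_parts (σ : Finpartition (univ : Finset α)) (N : ℕ) :
    ∑ π with σ ≤ π, N.descFactorial #π.parts = N ^ #σ.parts := by
  calc ∑ π with σ ≤ π, N.descFactorial #π.parts
      = ∑ π with σ ≤ π, Fintype.card {g : α → Fin N // ker g = π} := by
        refine sum_congr rfl fun π _ => ?_
        rw [Fintype.card_congr (kerEqEquiv π), Fintype.card_embedding_eq]
        simp
    _ = Fintype.card {g : α → Fin N // σ ≤ ker g} := by
        simp only [Fintype.card_subtype]
        rw [card_eq_sum_card_fiberwise (f := ker) (t := univ.filter (σ ≤ ·))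
          fun g hg => by simpa using hg]
        refine sum_congr rfl fun π hπ => ?_
        rw [filter_filter]
        refine congrArg card (filter_congr fun g _ => ?_)
        exact ⟨fun h => ⟨h ▸ (mem_filter.1 hπ).2, h⟩, And.right⟩
    _ = N ^ #σ.parts := by
        rw [Fintype.card_congr (leKerEquiv σ)]
        simp

end Finpartition

namespace Matrix

variable {ι : Type*} [Fintype ι]

theorem sum_abs_one_sub_apply_le [DecidableEq ι] {S : Matrix ι ι ℝ} (hS : ∀ i j, 0 ≤ S i j)
    {j : ι} (hcol : ∑ i, S i j ≤ 1) : ∑ i, |(1 - S) i j| ≤ 2 * (1 - S j j) := by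
  have hoff : ∑ i ∈ univ.erase j, |(1 - S) i j| = ∑ i ∈ univ.erase j, S i j :=
    sum_congr rfl fun i hi => by
      simp [one_apply_ne (ne_of_mem_erase hi), abs_of_nonneg (hS i j)]
  have hdiag : |(1 - S) j j| ≤ 1 - S j j := by
    rw [sub_apply, one_apply_eq, abs_of_nonneg]
    exact sub_nonneg.2 ((single_le_sum (fun i _ => hS i j) (mem_univ j)).trans hcol)
  rw [← add_sum_erase _ _ (mem_univ j), hoff]
  have := add_sum_erase univ (fun i => S i j) (mem_univ j)
  linarith

theorem sum_abs_mulVec_le {A : Matrix ι ι ℝ} {c : ℝ} (hA : ∀ j, ∑ i, |A i j| ≤ c)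
    (g : ι → ℝ) : ∑ i, |(A *ᵥ g) i| ≤ c * ∑ i, |g i| :=
  calc ∑ i, |(A *ᵥ g) i| ≤ ∑ i, ∑ j, |A i j| * |g j| :=
        sum_le_sum fun i _ => (abs_sum_le_sum_abs _ _).trans_eq (by simp [abs_mul])
    _ = ∑ j, (∑ i, |A i j|) * |g j| := by rw [sum_comm]; simp [sum_mul]
    _ ≤ ∑ j, c * |g j| := sum_le_sum fun j _ => by gcongr; exact hA j
    _ = c * ∑ j, |g j| := (mul_sum _ _ _).symm

theorem sum_abs_pow_mulVec_le [DecidableEq ι] {A : Matrix ι ι ℝ} {c : ℝ} (hc : 0 ≤ c)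
    (hA : ∀ j, ∑ i, |A i j| ≤ c) (g : ι → ℝ) (n : ℕ) :
    ∑ i, |(A ^ n *ᵥ g) i| ≤ c ^ n * ∑ i, |g i| := by
  induction n with
  | zero => simp
  | succ n ih =>
    calc ∑ i, |(A ^ (n + 1) *ᵥ g) i| = ∑ i, |(A *ᵥ (A ^ n *ᵥ g)) i| := by
          rw [pow_succ', mulVec_mulVec]
      _ ≤ c * (c ^ n * ∑ i, |g i|) := (sum_abs_mulVec_le hA _).trans (by gcongr)
      _ = c ^ (n + 1) * ∑ i, |g i| := by ring

end Matrix

theorem abs_sum_mul_le_iSup_mul {ι : Type*} [Fintype ι] (v g : ι → ℝ) :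
    |∑ i, v i * g i| ≤ (⨆ i, |v i|) * ∑ i, |g i| :=
  calc |∑ i, v i * g i| ≤ ∑ i, |v i| * |g i| :=
        (abs_sum_le_sum_abs _ _).trans_eq (by simp [abs_mul])
    _ ≤ ∑ i, (⨆ i, |v i|) * |g i| :=
        sum_le_sum fun i _ => by
          gcongr
          exact le_ciSup (Set.finite_range fun i => |v i|).bddAbove i
    _ = (⨆ i, |v i|) * ∑ i, |g i| := (mul_sum _ _ _).symm

theorem antitone_descFactorial_div_pow (N : ℕ) :
    Antitone fun k => (N.descFactorial k : ℝ) / (N : ℝ) ^ k := by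
  refine antitone_nat_of_succ_le fun k => ?_
  rw [Nat.descFactorial_succ, pow_succ, Nat.cast_mul, mul_comm ((N - k : ℕ) : ℝ),
    mul_div_mul_comm]
  exact mul_le_of_le_one_right (by positivity)
    (div_le_one_of_le₀ (by exact_mod_cast N.sub_le k) (by positivity))

section Resampling

variable {N m : ℕ}

theorem resampS_nonneg (π σ) : 0 ≤ resampS N m π σ := by
  unfold resampS; split_ifs <;> positivity

theorem resampS_self (σ) :
    resampS N m σ σ = (N.descFactorial #σ.parts : ℝ) / (N : ℝ) ^ #σ.parts :=
  if_pos le_rfl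

-- Not `= 1`: for `N = 0` the column vanishes, as `x / 0 = 0`.
theorem sum_resampS_le_one (σ) : ∑ π, resampS N m π σ ≤ 1 := by
  simp only [resampS]
  rw [← sum_filter, ← sum_div, ← Nat.cast_sum, σ.sum_descFactorial_card_parts, Nat.cast_pow]
  exact div_self_le_one _

theorem sum_abs_one_sub_resampS_le (σ) :
    ∑ π, |(1 - resampS N m) π σ| ≤ 2 * (1 - (N.descFactorial m : ℝ) / (N : ℝ) ^ m) := by
  refine (Matrix.sum_abs_one_sub_apply_le resampS_nonneg (sum_resampS_le_one σ)).trans ?_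
  have hcard : #σ.parts ≤ m := by simpa using σ.card_parts_le_card
  rw [resampS_self]
  linarith [antitone_descFactorial_div_pow N hcard]

end Resampling

theorem iterated_bootstrap_bias_bound_general (N m : ℕ) (k : ℕ)
    (v f : Finpartition (Finset.univ : Finset (Fin m)) → ℝ) :
    |∑ π : Finpartition (Finset.univ : Finset (Fin m)),
        v π * ((1 - resampS N m) ^ (k + 1)).mulVec f π| ≤
      (⨆ π : Finpartition (Finset.univ : Finset (Fin m)), |v π|) *
        (2 * (1 - (N.descFactorial m : ℝ) / (N : ℝ) ^ m)) ^ (k + 1) *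
        ∑ π : Finpartition (Finset.univ : Finset (Fin m)), |f π| := by
  have hc : 0 ≤ 2 * (1 - (N.descFactorial m : ℝ) / (N : ℝ) ^ m) := by
    have := antitone_descFactorial_div_pow N (Nat.zero_le m)
    simp only [Nat.descFactorial_zero, pow_zero, Nat.cast_one, div_one] at this
    linarith
  rw [mul_assoc]
  exact (abs_sum_mul_le_iSup_mul _ _).trans <| mul_le_mul_of_nonneg_left
    (Matrix.sum_abs_pow_mulVec_le hc sum_abs_one_sub_resampS_le f (k + 1))
    (Real.iSup_nonneg fun _ => abs_nonneg _)

/-- Bias bound for the `k`-times iterated bootstrap on moment polynomials: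
`|vᵀ (Id − S)^{k+1} f| ≤ ‖v‖_∞ · (2(1 − N^{(m)}/N^m))^{k+1} · ‖f‖₁`. -/
theorem iterated_bootstrap_bias_bound (N m : ℕ) (hm : 1 ≤ m) (hN : m ≤ N) (k : ℕ)
    (v f : Finpartition (Finset.univ : Finset (Fin m)) → ℝ) :
    |∑ π : Finpartition (Finset.univ : Finset (Fin m)),
        v π * ((1 - resampS N m) ^ (k + 1)).mulVec f π| ≤
      (⨆ π : Finpartition (Finset.univ : Finset (Fin m)), |v π|) *
        (2 * (1 - (N.descFactorial m : ℝ) / (N : ℝ) ^ m)) ^ (k + 1) *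
        ∑ π : Finpartition (Finset.univ : Finset (Fin m)), |f π| :=
  iterated_bootstrap_bias_bound_general N m k v f
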